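/- arXiv:2503.16250 — 2 statements merged into one kernel-verified Lean document; each statement's English description precedes it below -/
import Mathlib

section
/- Let n ≥ 3. In ℤ^{n+1}, the identity n²·E_{n−1} = (n+2)·D₂ − 4·D₁ − (n−2)·S₀ − (n+2)·Σ_{i=1}^{n−2} (n−(i+1))·S_i holds, where D₁ = nH − (n−1)E₁ − E₂ − ⋯ − E_{n−1}, D₂ = 3H − 2E₁ − E_n, S₀ = −2H + 3E₁ − E₂ − ⋯ − E_{n−2}, S_i = E_{n−1−i} − E_{n−i} for 1 ≤ i ≤ n−3, and S_{n−2} = H − E₁ − E₂ − E_n. -/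
open Finset

/-- The class of the line `H` in `H₂(Xₙ;ℤ) ≅ ℤ^{n+1}` (coordinate `0`). -/
def Hv (n : ℕ) : Fin (n + 1) → ℤ := Pi.single 0 1

open Fin.NatCast in
/-- The exceptional class `E_j` in `H₂(Xₙ;ℤ) ≅ ℤ^{n+1}` (coordinate `j`, for `1 ≤ j ≤ n`). -/
def Ev (n : ℕ) (j : ℕ) : Fin (n + 1) → ℤ := Pi.single (j : Fin (n + 1)) 1

/-- The class `D₁ = nH - (n-1)E₁ - E₂ - ⋯ - E_{n-1}`. -/
def D₁ (n : ℕ) : Fin (n + 1) → ℤ :=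
  n • Hv n - (n - 1) • Ev n 1 - ∑ j ∈ Finset.Icc 2 (n - 1), Ev n j

/-- The class `D₂ = 3H - 2E₁ - Eₙ`. -/
def D₂ (n : ℕ) : Fin (n + 1) → ℤ := 3 • Hv n - 2 • Ev n 1 - Ev n n

/-- The classes of the spheres of the `Cₙ`-configuration:
`S₀ = -2H + 3E₁ - E₂ - ⋯ - E_{n-2}`, `S_i = E_{n-1-i} - E_{n-i}` for `1 ≤ i ≤ n-3`,
and `S_{n-2} = H - E₁ - E₂ - Eₙ`. -/
def Sc (n : ℕ) (i : ℕ) : Fin (n + 1) → ℤ :=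
  if i = 0 then (-2 : ℤ) • Hv n + 3 • Ev n 1 - ∑ j ∈ Finset.Icc 2 (n - 2), Ev n j
  else if i = n - 2 then Hv n - Ev n 1 - Ev n 2 - Ev n n
  else Ev n (n - 1 - i) - Ev n (n - i)

/-! The middle spheres `S_i = E_{n-1-i} - E_{n-i}` (`1 ≤ i ≤ n-3`) telescope: their weights
`n-(i+1)` drop by one at each step, so Abel summation turns `Σ (n-(i+1))·S_i` into
`(E₂ + ⋯ + E_{n-2}) + E₂ - (n-2)·E_{n-1}`. Then every class in the identity is a combination of
`H`, `E₁`, `E_{n-1}`, `Eₙ` and the block `E₂ + ⋯ + E_{n-2}` (empty when `n = 3`, so no case split),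
and the identity is a comparison of five coefficients. -/

section Summation

variable {M : Type*}

theorem sum_Icc_reflect [AddCommMonoid M] (f : ℕ → M) {a b c : ℕ} (hac : a ≤ c)
    (hbc : b ≤ c) :
    ∑ i ∈ Icc a b, f (c - i) = ∑ j ∈ Icc (c - b) (c - a), f j :=
  sum_nbij' (c - ·) (c - ·) (fun i hi ↦ by rw [mem_Icc] at hi ⊢; omega)
    (fun j hj ↦ by rw [mem_Icc] at hj ⊢; omega) (fun i hi ↦ by rw [mem_Icc] at hi; omega)
    (fun j hj ↦ by rw [mem_Icc] at hj; omega) (fun _ _ ↦ rfl)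

theorem sum_Icc_sub_smul_sub [AddCommGroup M] (a : ℤ) (g : ℕ → M) (m : ℕ) :
    ∑ i ∈ Icc 1 m, (a - i) • (g i - g (i - 1)) =
      ∑ i ∈ Icc 1 m, g i + (a - 1 - m) • g m - (a - 1) • g 0 := by
  induction m with
  | zero => simp
  | succ m ih =>
    rw [sum_Icc_succ_top (by omega), sum_Icc_succ_top (by omega), ih, Nat.add_sub_cancel]
    push_cast
    module

end Summation

theorem Sc_zero (n : ℕ) :
    Sc n 0 = (-2 : ℤ) • Hv n + 3 • Ev n 1 - ∑ j ∈ Icc 2 (n - 2), Ev n j :=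
  if_pos rfl

theorem Sc_sub_two {n : ℕ} (hn : 3 ≤ n) : Sc n (n - 2) = Hv n - Ev n 1 - Ev n 2 - Ev n n := by
  rw [Sc, if_neg (by omega), if_pos rfl]

theorem Sc_of_mem_Icc {n i : ℕ} (hi : i ∈ Icc 1 (n - 3)) :
    Sc n i = Ev n (n - 1 - i) - Ev n (n - i) := by
  rw [mem_Icc] at hi
  rw [Sc, if_neg (by omega), if_neg (by omega)]

theorem sum_Icc_two_sub_one_Ev {n : ℕ} (hn : 3 ≤ n) :
    ∑ j ∈ Icc 2 (n - 1), Ev n j = ∑ j ∈ Icc 2 (n - 2), Ev n j + Ev n (n - 1) := by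
  rw [show n - 1 = n - 2 + 1 by omega, sum_Icc_succ_top (by omega)]

theorem sum_smul_Sc_Icc_one_sub_three {n : ℕ} (hn : 3 ≤ n) :
    ∑ i ∈ Icc 1 (n - 3), ((n : ℤ) - ((i : ℤ) + 1)) • Sc n i =
      ∑ j ∈ Icc 2 (n - 2), Ev n j + Ev n 2 - ((n : ℤ) - 2) • Ev n (n - 1) := by
  have hS : ∀ i ∈ Icc 1 (n - 3), ((n : ℤ) - ((i : ℤ) + 1)) • Sc n i =
      ((n - 1 : ℤ) - i) • (Ev n (n - 1 - i) - Ev n (n - 1 - (i - 1))) := by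
    intro i hi
    rw [Sc_of_mem_Icc hi, show n - 1 - (i - 1) = n - i by rw [mem_Icc] at hi; omega,
      sub_add_eq_sub_sub, sub_right_comm]
  rw [sum_congr rfl hS, sum_Icc_sub_smul_sub, sum_Icc_reflect _ (by omega) (by omega),
    show n - 1 - (n - 3) = 2 by omega, show n - 1 - 1 = n - 2 by omega, Nat.sub_zero,
    show ((n - 3 : ℕ) : ℤ) = n - 3 by omega]
  module

theorem sum_smul_Sc {n : ℕ} (hn : 3 ≤ n) :
    ∑ i ∈ Icc 1 (n - 2), ((n : ℤ) - ((i : ℤ) + 1)) • Sc n i =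
      ∑ j ∈ Icc 2 (n - 2), Ev n j + Hv n - Ev n 1 - Ev n n - ((n : ℤ) - 2) • Ev n (n - 1) := by
  rw [show n - 2 = n - 3 + 1 by omega, sum_Icc_succ_top (by omega),
    ← show n - 2 = n - 3 + 1 by omega, sum_smul_Sc_Icc_one_sub_three hn, Sc_sub_two hn,
    show ((n - 2 : ℕ) : ℤ) = n - 2 by omega]
  module

/-- The identity
`n²·E_{n-1} = (n+2)·D₂ - 4·D₁ - (n-2)·S₀ - (n+2)·Σ_{i=1}^{n-2} (n-(i+1))·S_i`
in `ℤ^{n+1}`. -/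
theorem period_identity_En_minus_one (n : ℕ) (hn : 3 ≤ n) :
    ((n : ℤ) ^ 2) • Ev n (n - 1) =
      ((n : ℤ) + 2) • D₂ n - (4 : ℤ) • D₁ n - ((n : ℤ) - 2) • Sc n 0 -
        ((n : ℤ) + 2) •
          ∑ i ∈ Finset.Icc 1 (n - 2), ((n : ℤ) - ((i : ℤ) + 1)) • Sc n i := by
  rw [sum_smul_Sc hn, D₁, D₂, Sc_zero, sum_Icc_two_sub_one_Ev hn, ← natCast_zsmul (Hv n) n,
    ← natCast_zsmul (Ev n 1) (n - 1), Nat.cast_sub (by omega : 1 ≤ n)]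
  push_cast
  module
end

section
/- Let n ≥ 3. The n+1 vectors D₁ = nH − (n−1)E₁ − E₂ − ⋯ − E_{n−1}, D₂ = 3H − 2E₁ − E_n, S₀ = −2H + 3E₁ − E₂ − ⋯ − E_{n−2}, S_i = E_{n−1−i} − E_{n−i} (1 ≤ i ≤ n−3), and S_{n−2} = H − E₁ − E₂ − E_n generate a subgroup of ℤ^{n+1} of finite index equal to n²; in particular they are linearly independent over ℚ and form a basis of ℚ^{n+1}. -/
open Finset

/-- The family `D₁, D₂, S₀, …, S_{n-2}` indexed by `Fin (n+1)`. -/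
def famF (n : ℕ) (i : Fin (n + 1)) : Fin (n + 1) → ℤ :=
  if (i : ℕ) = 0 then D₁ n else if (i : ℕ) = 1 then D₂ n else Sc n ((i : ℕ) - 2)

/-!
Let `L` be the subgroup generated by the configuration. Modulo `L` the classes `E₂, …, E_{n-1}`
coincide, since the spheres `S_i` with `1 ≤ i ≤ n-3` are their successive differences, and the
four remaining generators `D₁, D₂, S₀, S_{n-2}` then become linear relations between `H, E₁, E₂, Eₙ`.
Solving them shows that `ℤ^{n+1} ⧸ L` is cyclic, generated by `H - E₁`, with `H, E₁, E_j, Eₙ`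
equal to `-(n+3), -(n+4), n+2, -(n+1)` times it, and that `n² (H - E₁) ∈ L`. Conversely the
homomorphism `ℤ^{n+1} → ℤ/n²` with these weights kills `L` and sends `H - E₁` to `1`, so the
quotient has exactly `n²` elements. Finally, a subgroup of finite index spans `ℚ^{n+1}`, so its
`n + 1` generators form a basis.
-/

theorem AddSubgroup.index_eq_of_zmultiples_mk_eq_top {G : Type*} [AddCommGroup G]
    {L : AddSubgroup G} {m : ℕ} (φ : G →+ ZMod m) (hL : L ≤ φ.ker) {g : G} (hφg : φ g = 1)
    (hmg : m • g ∈ L) (hgen : AddSubgroup.zmultiples (g : G ⧸ L) = ⊤) : L.index = m := by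
  have horder : addOrderOf (g : G ⧸ L) = m := by
    refine Nat.dvd_antisymm (addOrderOf_dvd_of_nsmul_eq_zero ?_) ?_
    · rwa [← QuotientAddGroup.mk_nsmul, QuotientAddGroup.eq_zero_iff]
    · simpa [hφg, ZMod.addOrderOf_one] using
        addOrderOf_map_dvd (QuotientAddGroup.lift L φ hL) (g : G ⧸ L)
  rw [AddSubgroup.index, ← AddSubgroup.card_top, ← hgen, Nat.card_zmultiples, horder]

theorem AddMonoidHom.map_mem_of_forall_map_single_mem {κ M : Type*} [Fintype κ] [DecidableEq κ]
    [AddCommGroup M] (f : (κ → ℤ) →+ M) {H : AddSubgroup M}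
    (h : ∀ a, f (Pi.single a 1) ∈ H) (v : κ → ℤ) : f v ∈ H := by
  rw [← Finset.univ_sum_single v, map_sum]
  refine sum_mem fun a _ => ?_
  rw [← mul_one (v a), ← smul_eq_mul, Pi.single_smul, map_zsmul]
  exact zsmul_mem (h a) _

theorem linearIndependent_intCast_of_index_ne_zero {ι κ : Type*} [Fintype ι] [Fintype κ]
    [DecidableEq κ] (v : ι → κ → ℤ) (hcard : Fintype.card ι = Fintype.card κ)
    (hindex : (AddSubgroup.closure (Set.range v)).index ≠ 0) :
    LinearIndependent ℚ fun i j => (v i j : ℚ) := by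
  set c := (Int.castAddHom ℚ).compLeft κ
  set V := Submodule.span ℚ (Set.range fun i j => (v i j : ℚ))
  have hclosure : AddSubgroup.closure (Set.range v) ≤ V.toAddSubgroup.comap c := by
    rw [AddSubgroup.closure_le]
    rintro _ ⟨i, rfl⟩
    exact Submodule.subset_span ⟨i, rfl⟩
  have hsingle (a : κ) : Pi.single a (1 : ℚ) ∈ V := by
    have hmem := hclosure (AddSubgroup.nsmul_index_mem _ (Pi.single a 1))
    rw [AddSubgroup.mem_comap, map_nsmul, ← Nat.cast_smul_eq_nsmul ℚ,
      Submodule.mem_toAddSubgroup, Submodule.smul_mem_iff _ (Nat.cast_ne_zero.2 hindex)] at hmem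
    convert hmem
    ext j
    by_cases hj : j = a <;> simp [c, hj]
  refine linearIndependent_of_top_le_span_of_card_eq_finrank ?_ (by simpa using hcard)
  rw [← (Pi.basisFun ℚ κ).span_eq, Submodule.span_le]
  rintro _ ⟨a, rfl⟩
  simpa using hsingle a

namespace CnConfiguration

variable {n : ℕ}

def configLattice (n : ℕ) : AddSubgroup (Fin (n + 1) → ℤ) :=
  AddSubgroup.closure (insert (D₁ n) (insert (D₂ n) (Sc n '' Set.Iic (n - 2))))

theorem range_famF (hn : 2 ≤ n) :
    Set.range (famF n) = insert (D₁ n) (insert (D₂ n) (Sc n '' Set.Iic (n - 2))) := by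
  ext v
  constructor
  · rintro ⟨i, rfl⟩
    unfold famF
    split_ifs
    · exact Set.mem_insert _ _
    · exact Set.mem_insert_of_mem _ (Set.mem_insert _ _)
    · exact Set.mem_insert_of_mem _ (Set.mem_insert_of_mem _ ⟨_, Set.mem_Iic.2 (by omega), rfl⟩)
  · rintro (rfl | rfl | ⟨m, hm, rfl⟩)
    · exact ⟨⟨0, by omega⟩, by simp [famF]⟩
    · exact ⟨⟨1, by omega⟩, by simp [famF]⟩
    · refine ⟨⟨m + 2, by have := Set.mem_Iic.1 hm; omega⟩, ?_⟩
      simp [famF]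

theorem Ev_zero : Ev n 0 = Hv n := by
  simp [Ev, Hv]

theorem Sc_last (hn : 3 ≤ n) : Sc n (n - 2) = Hv n - Ev n 1 - Ev n 2 - Ev n n := by
  rw [Sc, if_neg (by omega), if_pos rfl]

theorem Sc_sub_one_sub {k : ℕ} (h2 : 2 ≤ k) (hk : k ≤ n - 2) :
    Sc n (n - 1 - k) = Ev n k - Ev n (k + 1) := by
  rw [Sc, if_neg (by omega), if_neg (by omega), show n - 1 - (n - 1 - k) = k by omega,
    show n - (n - 1 - k) = k + 1 by omega]

-- Index `0` stands for `H` and index `j ≥ 1` for `E_j`, as in `Ev n 0 = Hv n`.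
def weight (n j : ℕ) : ℤ :=
  if j = 0 then -(n + 3) else if j = 1 then -(n + 4) else if j = n then -(n + 1) else n + 2

theorem weight_zero : weight n 0 = -(n + 3) := if_pos rfl

theorem weight_one : weight n 1 = -(n + 4) := by
  rw [weight, if_neg one_ne_zero, if_pos rfl]

theorem weight_self (hn : 2 ≤ n) : weight n n = -(n + 1) := by
  rw [weight, if_neg (by omega), if_neg (by omega), if_pos rfl]

theorem weight_of_two_le_of_lt {j : ℕ} (h2 : 2 ≤ j) (hj : j < n) : weight n j = n + 2 := by
  rw [weight, if_neg (by omega), if_neg (by omega), if_neg (by omega)]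

section Presentation

variable {A : Type*} [AddCommGroup A] (f : (Fin (n + 1) → ℤ) →+ A)

theorem map_sum_Ev (hconst : ∀ j, 2 ≤ j → j ≤ n - 1 → f (Ev n j) = f (Ev n 2)) {m : ℕ}
    (hm : m ≤ n - 1) : f (∑ j ∈ Icc 2 m, Ev n j) = (m - 1) • f (Ev n 2) := by
  rw [map_sum, sum_congr rfl fun j hj => hconst j (mem_Icc.1 hj).1 ((mem_Icc.1 hj).2.trans hm),
    sum_const, Nat.card_Icc, show m + 1 - 2 = m - 1 by omega]

theorem configLattice_le_ker_iff :
    configLattice n ≤ f.ker ↔ (∀ j, 2 ≤ j → j ≤ n - 1 → f (Ev n j) = f (Ev n 2)) ∧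
      f (D₁ n) = 0 ∧ f (D₂ n) = 0 ∧ f (Sc n 0) = 0 ∧ f (Sc n (n - 2)) = 0 := by
  rw [configLattice, AddSubgroup.closure_le]
  constructor
  · intro h
    have hSc {m : ℕ} (hm : m ≤ n - 2) : f (Sc n m) = 0 :=
      h (Set.mem_insert_of_mem _ (Set.mem_insert_of_mem _ ⟨m, hm, rfl⟩))
    refine ⟨fun j hj hjn => ?_, h (Set.mem_insert _ _),
      h (Set.mem_insert_of_mem _ (Set.mem_insert _ _)), hSc (Nat.zero_le _), hSc le_rfl⟩
    induction j, hj using Nat.le_induction with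
    | base => rfl
    | succ k hk ih =>
      have hstep := hSc (m := n - 1 - k) (by omega)
      rw [Sc_sub_one_sub hk (by omega), map_sub, sub_eq_zero] at hstep
      rw [← hstep, ih (by omega)]
  · rintro ⟨hconst, hD₁, hD₂, hS₀, hSlast⟩ v (rfl | rfl | ⟨m, hm, rfl⟩)
    · exact hD₁
    · exact hD₂
    · rcases Nat.eq_zero_or_pos m with rfl | hpos
      · exact hS₀
      rcases eq_or_ne m (n - 2) with rfl | hne
      · exact hSlast
      have hm' : m ≤ n - 2 := hm
      rw [SetLike.mem_coe, AddMonoidHom.mem_ker, show m = n - 1 - (n - 1 - m) by omega,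
        Sc_sub_one_sub (by omega) (by omega), map_sub, sub_eq_zero]
      exact (hconst _ (by omega) (by omega)).trans (hconst _ (by omega) (by omega)).symm

theorem configLattice_le_ker_iff_relations (hn : 3 ≤ n) :
    configLattice n ≤ f.ker ↔ (∀ j, 2 ≤ j → j ≤ n - 1 → f (Ev n j) = f (Ev n 2)) ∧
      (n : ℤ) • f (Hv n) - ((n : ℤ) - 1) • f (Ev n 1) - ((n : ℤ) - 2) • f (Ev n 2) = 0 ∧
      3 • f (Hv n) - 2 • f (Ev n 1) - f (Ev n n) = 0 ∧
      (-2 : ℤ) • f (Hv n) + 3 • f (Ev n 1) - ((n : ℤ) - 3) • f (Ev n 2) = 0 ∧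
      f (Hv n) - f (Ev n 1) - f (Ev n 2) - f (Ev n n) = 0 := by
  rw [configLattice_le_ker_iff f]
  refine and_congr_right fun hconst => ?_
  rw [D₁, D₂, Sc_last hn, Sc, if_pos rfl]
  simp only [map_sub, map_add, map_nsmul, map_zsmul, map_sum_Ev f hconst (le_refl (n - 1)),
    map_sum_Ev f hconst (show n - 2 ≤ n - 1 by omega)]
  have hcast {k : ℕ} {c : ℤ} (hk : (k : ℤ) = c) (x : A) : k • x = c • x := by
    rw [← hk, natCast_zsmul]
  rw [hcast (k := n) rfl, hcast (k := n - 1) (c := n - 1) (by omega),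
    hcast (k := n - 1 - 1) (c := n - 2) (by omega), hcast (k := n - 2 - 1) (c := n - 3) (by omega)]

theorem map_Ev_eq_weight_zsmul (hn : 3 ≤ n) (hf : configLattice n ≤ f.ker) {j : ℕ} (hj : j ≤ n) :
    f (Ev n j) = weight n j • f (Hv n - Ev n 1) := by
  obtain ⟨hconst, hD₁, hD₂, hS₀, hSlast⟩ := (configLattice_le_ker_iff_relations f hn).1 hf
  rw [map_sub, weight]
  split_ifs with h0 h1 hjn
  · rw [h0, Ev_zero]
    linear_combination (norm := module) hD₁ - hS₀ + hD₂ - hSlast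
  · rw [h1]
    linear_combination (norm := module) hD₁ - hS₀ + hD₂ - hSlast
  · rw [hjn]
    linear_combination (norm := module) hD₁ - hS₀ - hSlast
  · rw [hconst j (by omega) (by omega)]
    linear_combination (norm := module) hS₀ - hD₁

theorem sq_nsmul_map_Hv_sub_Ev_one (hn : 3 ≤ n) (hf : configLattice n ≤ f.ker) :
    (n ^ 2) • f (Hv n - Ev n 1) = 0 := by
  obtain ⟨-, hD₁, hD₂, hS₀, hSlast⟩ := (configLattice_le_ker_iff_relations f hn).1 hf
  rw [map_sub]
  linear_combination (norm := module) ((n : ℤ) - 2) • hD₁ - ((n : ℤ) - 1) • hS₀ + hD₂ - hSlast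

end Presentation

noncomputable def period (n : ℕ) : (Fin (n + 1) → ℤ) →+ ZMod (n ^ 2) :=
  ((Pi.basisFun ℤ (Fin (n + 1))).constr ℤ fun a => (weight n a : ZMod (n ^ 2))).toAddMonoidHom

theorem period_Ev {j : ℕ} (hj : j ≤ n) : period n (Ev n j) = weight n j := by
  rw [period, LinearMap.toAddMonoidHom_coe, Ev, ← Pi.basisFun_apply ℤ,
    Module.Basis.constr_basis, Fin.val_cast_of_lt (by omega)]

theorem period_Hv : period n (Hv n) = weight n 0 := by
  rw [← Ev_zero, period_Ev (Nat.zero_le _)]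

theorem period_Hv_sub_Ev_one (hn : 1 ≤ n) : period n (Hv n - Ev n 1) = 1 := by
  rw [map_sub, period_Hv, period_Ev hn, weight_zero, weight_one]
  push_cast
  ring

theorem configLattice_le_ker_period (hn : 3 ≤ n) : configLattice n ≤ (period n).ker := by
  have hsq : (n : ZMod (n ^ 2)) ^ 2 = 0 := by rw [← Nat.cast_pow, ZMod.natCast_self]
  refine (configLattice_le_ker_iff_relations _ hn).2 ⟨fun j h2 hj => ?_, ?_, ?_, ?_, ?_⟩
  · rw [period_Ev (by omega), period_Ev (by omega), weight_of_two_le_of_lt h2 (by omega),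
      weight_of_two_le_of_lt le_rfl (by omega)]
  all_goals
    simp only [period_Hv, period_Ev (show 1 ≤ n by omega), period_Ev (show 2 ≤ n by omega),
      period_Ev le_rfl, weight_zero, weight_one, weight_self (show 2 ≤ n by omega),
      weight_of_two_le_of_lt le_rfl (show 2 < n by omega), zsmul_eq_mul, nsmul_eq_mul]
    push_cast
  · linear_combination (-1 : ZMod (n ^ 2)) * hsq
  · ring
  · linear_combination (-1 : ZMod (n ^ 2)) * hsq
  · ring

theorem zmultiples_mk_Hv_sub_Ev_one_eq_top (hn : 3 ≤ n) :
    AddSubgroup.zmultiples ((Hv n - Ev n 1 : Fin (n + 1) → ℤ) : _ ⧸ configLattice n) = ⊤ := by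
  have hker : configLattice n ≤ (QuotientAddGroup.mk' (configLattice n)).ker :=
    (QuotientAddGroup.ker_mk' _).ge
  refine eq_top_iff.2 fun y _ => ?_
  obtain ⟨v, rfl⟩ := QuotientAddGroup.mk'_surjective (configLattice n) y
  refine (QuotientAddGroup.mk' _).map_mem_of_forall_map_single_mem (fun a => ?_) v
  have hEv : Ev n a = Pi.single a 1 := by rw [Ev, Fin.cast_val_eq_self]
  rw [← hEv]
  exact ⟨weight n a, (map_Ev_eq_weight_zsmul _ hn hker a.is_le).symm⟩

theorem configLattice_index (hn : 3 ≤ n) : (configLattice n).index = n ^ 2 := by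
  refine AddSubgroup.index_eq_of_zmultiples_mk_eq_top (period n) (configLattice_le_ker_period hn)
    (period_Hv_sub_Ev_one (by omega)) ?_ (zmultiples_mk_Hv_sub_Ev_one_eq_top hn)
  rw [← QuotientAddGroup.eq_zero_iff, ← QuotientAddGroup.mk'_apply, map_nsmul]
  exact sq_nsmul_map_Hv_sub_Ev_one _ hn (QuotientAddGroup.ker_mk' _).ge

end CnConfiguration

/-- The `n+1` vectors `D₁, D₂, S₀, …, S_{n-2}` generate a subgroup of `ℤ^{n+1}` of finite
index equal to `n²`; in particular they are linearly independent over `ℚ` (hence form a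
basis of `ℚ^{n+1}`). -/
theorem configuration_rational_basis (n : ℕ) (hn : 3 ≤ n) :
    (AddSubgroup.closure
        (insert (D₁ n) (insert (D₂ n) (Sc n '' Set.Iic (n - 2))))).index = n ^ 2 ∧
      LinearIndependent ℚ
        (fun (i : Fin (n + 1)) (j : Fin (n + 1)) => ((famF n i j : ℤ) : ℚ)) := by
  have hindex : (CnConfiguration.configLattice n).index = n ^ 2 :=
    CnConfiguration.configLattice_index hn
  refine ⟨hindex, linearIndependent_intCast_of_index_ne_zero (famF n) rfl ?_⟩
  rw [CnConfiguration.range_famF (by omega)]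
  change (CnConfiguration.configLattice n).index ≠ 0
  rw [hindex]
  positivity
end
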